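/- arXiv:1904.06021 — 6 statements merged into one kernel-verified Lean document; each statement's English description precedes it below -/
import Mathlib

section
/- Let (S₁, v₁) and (S₂, v₂) be based big-trees. There exists g ∈ G with g•S₁ = S₂ and g•v₁ = v₂ if and only if there exist g₁, g₂ ∈ G and a vertex w with g₁•v₁ = g₂•v₂ = w such that the subgroups g₁ PStab(S₁) g₁⁻¹ and g₂ PStab(S₂) g₂⁻¹ of Stab(w) are conjugate by an element of Stab(w). -/
open MulAction Pointwise

/-- The pointwise stabilizer of a set of vertices `S`. -/
def PStab (G : Type*) [Group G] {V : Type*} [MulAction G V] (S : Set V) : Subgroup G :=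
  ⨅ v ∈ S, MulAction.stabilizer G v

/-- `S` is a subtree of `T`: it is nonempty and its induced subgraph is connected. -/
def IsSubtree {V : Type*} (T : SimpleGraph V) (S : Set V) : Prop :=
  S.Nonempty ∧ (T.induce S).Connected

/-- `S` is a nontrivial subtree: a subtree containing two adjacent vertices. -/
def IsNontrivialSubtree {V : Type*} (T : SimpleGraph V) (S : Set V) : Prop :=
  IsSubtree T S ∧ ∃ u ∈ S, ∃ v ∈ S, T.Adj u v

/-- `S` is a big-tree: a nontrivial subtree with infinite pointwise stabilizer, not properly
contained in a subtree with the same pointwise stabilizer. -/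
def IsBigTree (G : Type*) [Group G] {V : Type*} [MulAction G V]
    (T : SimpleGraph V) (S : Set V) : Prop :=
  IsNontrivialSubtree T S ∧ ((PStab G S : Subgroup G) : Set G).Infinite ∧
    ¬ ∃ S' : Set V, IsSubtree T S' ∧ S ⊂ S' ∧ PStab G S' = PStab G S

/-- Conjugation of a subgroup: `conjSub g H = g H g⁻¹`. -/
def conjSub {G : Type*} [Group G] (g : G) (H : Subgroup G) : Subgroup G :=
  H.map (MulAut.conj g).toMonoidHom

/-!
Since `PStab(g • S) = g PStab(S) g⁻¹`, the right-hand condition says that `k = g₂⁻¹ x g₁` moves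
`v₁` to `v₂` and conjugates `PStab(S₁)` onto `PStab(S₂)`, so `k • S₁` and `S₂` are subtrees
meeting at `v₂` with the same pointwise stabilizer. Their union is again a subtree with that
stabilizer, and maximality of each big-tree forces it to absorb the other: `k • S₁ = S₂`.
-/

section ConjSub

variable {G : Type*} [Group G]

lemma conjSub_one (H : Subgroup G) : conjSub 1 H = H := by
  ext y
  simp [conjSub]

lemma conjSub_mul (x g : G) (H : Subgroup G) :
    conjSub (x * g) H = conjSub x (conjSub g H) := by
  rw [conjSub, conjSub, conjSub, Subgroup.map_map]
  congr 1
  ext y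
  simp [MulAut.conj_apply, mul_assoc]

end ConjSub

section PStab

variable {G V : Type*} [Group G] [MulAction G V]

lemma PStab_eq_fixingSubgroup (S : Set V) : PStab G S = fixingSubgroup G S := by
  ext g
  simp [PStab, Subgroup.mem_iInf, mem_fixingSubgroup_iff]

lemma PStab_union (S S' : Set V) : PStab G (S ∪ S') = PStab G S ⊓ PStab G S' := by
  simp only [PStab_eq_fixingSubgroup, fixingSubgroup_union]

lemma PStab_smul (g : G) (S : Set V) : PStab G (g • S) = conjSub g (PStab G S) := by
  rw [PStab_eq_fixingSubgroup, PStab_eq_fixingSubgroup]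
  exact SubMulAction.fixingSubgroup_smul_eq_fixingSubgroup_map_conj S g

end PStab

section BigTree

variable {G V : Type*} [Group G] [MulAction G V] {T : SimpleGraph V}

lemma IsSubtree.smul (hadj : ∀ (g : G) (u v : V), T.Adj u v → T.Adj (g • u) (g • v))
    {S : Set V} (hS : IsSubtree T S) (g : G) : IsSubtree T (g • S) := by
  let φ : T →g T := ⟨(g • ·), hadj g _ _⟩
  have hmaps : Set.MapsTo φ S (g • S) := fun _ hv => Set.smul_mem_smul_set hv
  refine ⟨hS.1.smul_set, hS.2.map (SimpleGraph.induceHom φ hmaps) ?_⟩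
  rintro ⟨_, v, hv, rfl⟩
  exact ⟨⟨v, hv⟩, rfl⟩

lemma IsSubtree.union {S S' : Set V} (hS : IsSubtree T S) (hS' : IsSubtree T S')
    (hmeet : (S ∩ S').Nonempty) : IsSubtree T (S ∪ S') :=
  ⟨hS.1.mono Set.subset_union_left, 
    SimpleGraph.induce_union_connected hS.2.preconnected hS'.2.preconnected hmeet⟩

lemma IsBigTree.subset_of_PStab_le {S S' : Set V} (hS : IsBigTree G T S)
    (hS' : IsSubtree T S') (hmeet : (S ∩ S').Nonempty) (hle : PStab G S ≤ PStab G S') :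
    S' ⊆ S := by
  by_contra hnot
  refine hS.2.2 ⟨S ∪ S', hS.1.1.union hS' hmeet, Set.ssubset_union_left_iff.mpr hnot, ?_⟩
  rw [PStab_union, inf_eq_left.mpr hle]

lemma IsBigTree.smul_eq_of_PStab_smul_eq
    (hadj : ∀ (g : G) (u v : V), T.Adj u v → T.Adj (g • u) (g • v))
    {S₁ S₂ : Set V} {v₁ v₂ : V} {k : G} (h₁ : IsBigTree G T S₁) (h₂ : IsBigTree G T S₂)
    (hv₁ : v₁ ∈ S₁) (hv₂ : v₂ ∈ S₂) (hk : k • v₁ = v₂)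
    (hP : PStab G (k • S₁) = PStab G S₂) : k • S₁ = S₂ := by
  have hP' : PStab G (k⁻¹ • S₂) = PStab G S₁ := by
    rw [PStab_smul, ← hP, PStab_smul, ← conjSub_mul, inv_mul_cancel, conjSub_one]
  apply Set.Subset.antisymm
  · exact h₂.subset_of_PStab_le (h₁.1.1.smul hadj k)
      ⟨v₂, hv₂, hk ▸ Set.smul_mem_smul_set hv₁⟩ hP.ge
  · exact Set.subset_smul_set_iff.mpr (h₁.subset_of_PStab_le (h₂.1.1.smul hadj k⁻¹)
      ⟨v₁, hv₁, Set.mem_inv_smul_set_iff.mpr (hk ▸ hv₂)⟩ hP'.ge)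

end BigTree

theorem basedBigTree_orbit_iff_conjugate_general {G V : Type*} [Group G] [MulAction G V]
    (T : SimpleGraph V)
    (hadj : ∀ (g : G) (u v : V), T.Adj u v ↔ T.Adj (g • u) (g • v))
    (S₁ S₂ : Set V) (v₁ v₂ : V)
    (h₁ : IsBigTree G T S₁) (h₂ : IsBigTree G T S₂) (hv₁ : v₁ ∈ S₁) (hv₂ : v₂ ∈ S₂) :
    (∃ g : G, g • S₁ = S₂ ∧ g • v₁ = v₂) ↔
      ∃ (g₁ g₂ : G) (w : V), g₁ • v₁ = w ∧ g₂ • v₂ = w ∧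
        ∃ x ∈ MulAction.stabilizer G w,
          conjSub x (conjSub g₁ (PStab G S₁)) = conjSub g₂ (PStab G S₂) := by
  constructor
  · rintro ⟨g, rfl, rfl⟩
    exact ⟨g, 1, g • v₁, rfl, one_smul _ _, 1, one_mem _, by
      rw [conjSub_one, conjSub_one, PStab_smul]⟩
  · rintro ⟨g₁, g₂, w, rfl, hw₂, x, hx, hconj⟩
    have hk : (g₂⁻¹ * x * g₁) • v₁ = v₂ := by
      rw [mul_smul, mul_smul, mem_stabilizer_iff.mp hx, ← hw₂, inv_smul_smul]
    have hP : PStab G ((g₂⁻¹ * x * g₁) • S₁) = PStab G S₂ := by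
      rw [PStab_smul, conjSub_mul, conjSub_mul, hconj, ← conjSub_mul, inv_mul_cancel, conjSub_one]
    exact ⟨_, h₁.smul_eq_of_PStab_smul_eq (fun g u v => (hadj g u v).mp) h₂ hv₁ hv₂ hk hP,
      hk⟩

/-- for based big-trees `(S₁, v₁)` and `(S₂, v₂)`, there is `g ∈ G` with
`g • S₁ = S₂` and `g • v₁ = v₂` iff there are `g₁, g₂ ∈ G` and a vertex `w` with
`g₁ • v₁ = g₂ • v₂ = w` such that the subgroups `g₁ PStab(S₁) g₁⁻¹` and `g₂ PStab(S₂) g₂⁻¹`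
of `Stab(w)` are conjugate by an element of `Stab(w)`. -/
theorem basedBigTree_orbit_iff_conjugate {G V : Type*} [Group G] [MulAction G V]
    (T : SimpleGraph V) (htree : T.IsTree)
    (hadj : ∀ (g : G) (u v : V), T.Adj u v ↔ T.Adj (g • u) (g • v))
    (hninv : ¬ ∃ (g : G) (u v : V), T.Adj u v ∧ g • u = v ∧ g • v = u)
    (S₁ S₂ : Set V) (v₁ v₂ : V)
    (h₁ : IsBigTree G T S₁) (h₂ : IsBigTree G T S₂) (hv₁ : v₁ ∈ S₁) (hv₂ : v₂ ∈ S₂) :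
    (∃ g : G, g • S₁ = S₂ ∧ g • v₁ = v₂) ↔
      ∃ (g₁ g₂ : G) (w : V), g₁ • v₁ = w ∧ g₂ • v₂ = w ∧
        ∃ x ∈ MulAction.stabilizer G w,
          conjSub x (conjSub g₁ (PStab G S₁)) = conjSub g₂ (PStab G S₂) :=
  basedBigTree_orbit_iff_conjugate_general T hadj S₁ S₂ v₁ v₂ h₁ h₂ hv₁ hv₂
end

section
/- Let S₁ and S₂ be lowest big-trees. If PStab(S₁) ∩ PStab(S₂) is infinite, then S₁ = S₂ (and hence PStab(S₁) = PStab(S₂)). -/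
open MulAction Pointwise

/-- A big-tree is lowest if it is not properly contained in another big-tree. -/
def IsLowestBigTree (G : Type*) [Group G] {V : Type*} [MulAction G V]
    (T : SimpleGraph V) (S : Set V) : Prop :=
  IsBigTree G T S ∧ ¬ ∃ S' : Set V, IsBigTree G T S' ∧ S ⊂ S'

/-!
Let `H = PStab S₁ ⊓ PStab S₂` and let `F` be the set of vertices fixed by `H`. In a tree an
automorphism fixing two vertices fixes the unique path between them, so `F` is a subtree; it
contains `S₁` and `S₂`. If a subtree `S' ⊇ F` has `PStab S' = PStab F ≥ H`, then `S'` is fixed by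
`H`, i.e. `S' ⊆ F`. Hence `F` is a big-tree, and lowestness gives `S₁ = F = S₂`.
-/

open SimpleGraph

theorem SimpleGraph.IsAcyclic.apply_eq_of_mem_support {V : Type*} {T : SimpleGraph V}
    (hT : T.IsAcyclic) (φ : T ≃g T) {u v : V} {p : T.Walk u v} (hp : p.IsPath)
    (hu : φ u = u) (hv : φ v = v) {w : V} (hw : w ∈ p.support) : φ w = w := by
  have hq : ((p.map φ.toHom).copy hu hv).IsPath :=
    (Walk.isPath_copy _ hu hv).mpr (hp.map φ.injective)
  have hpq : (p.map φ.toHom).copy hu hv = p :=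
    congrArg Subtype.val ((hT.subsingleton_path u v).elim ⟨_, hq⟩ ⟨p, hp⟩)
  have hsupp : p.support.map φ = p.support.map id := by
    simpa [Walk.support_copy, Walk.support_map] using congrArg Walk.support hpq
  exact List.map_eq_map_iff.mp hsupp w hw

section
variable {G V : Type*} [Group G] [MulAction G V] {T : SimpleGraph V}

theorem le_PStab_iff {H : Subgroup G} {S : Set V} : H ≤ PStab G S ↔ S ⊆ fixedPoints H V := by
  simp only [PStab, le_iInf₂_iff]
  refine forall₂_congr fun v _ => ?_
  simp [SetLike.le_def, mem_fixedPoints, Subgroup.smul_def]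

theorem isSubtree_fixedPoints (hT : T.IsTree)
    (hadj : ∀ (g : G) (u v : V), T.Adj u v ↔ T.Adj (g • u) (g • v)) (H : Subgroup G)
    (hne : (fixedPoints H V).Nonempty) : IsSubtree T (fixedPoints H V) := by
  obtain ⟨u, hu⟩ := hne
  refine ⟨⟨u, hu⟩, T.induce_connected_of_patches u hu fun {v} hv => ?_⟩
  obtain ⟨p, hp, -⟩ := hT.existsUnique_path u v
  refine ⟨{w | w ∈ p.support}, fun w hw h => ?_, p.start_mem_support, p.end_mem_support,
    p.connected_induce_support.preconnected _ _⟩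
  let φ : T ≃g T := ⟨MulAction.toPerm (h : G), fun {a b} => (hadj h a b).symm⟩
  exact hT.isAcyclic.apply_eq_of_mem_support φ hp (hu h) (hv h) hw

theorem isBigTree_fixedPoints (hT : T.IsTree)
    (hadj : ∀ (g : G) (u v : V), T.Adj u v ↔ T.Adj (g • u) (g • v)) {H : Subgroup G}
    (hH : (H : Set G).Infinite) {S : Set V} (hS : IsNontrivialSubtree T S)
    (hSH : H ≤ PStab G S) : IsBigTree G T (fixedPoints H V) := by
  have hSF : S ⊆ fixedPoints H V := le_PStab_iff.mp hSH
  have hHF : H ≤ PStab G (fixedPoints H V) := le_PStab_iff.mpr subset_rfl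
  obtain ⟨u, hu, v, hv, huv⟩ := hS.2
  refine ⟨⟨isSubtree_fixedPoints hT hadj H ⟨u, hSF hu⟩, u, hSF hu, v, hSF hv, huv⟩,
    hH.mono (SetLike.coe_subset_coe.mpr hHF), ?_⟩
  rintro ⟨S', -, hFS', hstab⟩
  exact hFS'.not_subset (le_PStab_iff.mp (hstab ▸ hHF))

theorem IsLowestBigTree.eq_of_subset {S S' : Set V} (h : IsLowestBigTree G T S)
    (hS' : IsBigTree G T S') (hSS' : S ⊆ S') : S = S' :=
  hSS'.eq_or_ssubset.resolve_right fun hss => h.2 ⟨S', hS', hss⟩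

end

theorem lowestBigTree_eq_of_infinite_inter_pstab_general {G V : Type*} [Group G] [MulAction G V]
    (T : SimpleGraph V) (htree : T.IsTree)
    (hadj : ∀ (g : G) (u v : V), T.Adj u v ↔ T.Adj (g • u) (g • v))
    (S₁ S₂ : Set V) (h₁ : IsLowestBigTree G T S₁) (h₂ : IsLowestBigTree G T S₂)
    (hinf : ((PStab G S₁ ⊓ PStab G S₂ : Subgroup G) : Set G).Infinite) :
    S₁ = S₂ ∧ PStab G S₁ = PStab G S₂ := by
  have hF := isBigTree_fixedPoints htree hadj hinf h₁.1.1 inf_le_left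
  have hS₁F := h₁.eq_of_subset hF (le_PStab_iff.mp inf_le_left)
  have hS₂F := h₂.eq_of_subset hF (le_PStab_iff.mp inf_le_right)
  have hS : S₁ = S₂ := hS₁F.trans hS₂F.symm
  exact ⟨hS, hS ▸ rfl⟩

/-- if `S₁`, `S₂` are lowest big-trees and `PStab S₁ ∩ PStab S₂` is infinite, then
`S₁ = S₂` (and hence `PStab S₁ = PStab S₂`). -/
theorem lowestBigTree_eq_of_infinite_inter_pstab {G V : Type*} [Group G] [MulAction G V]
    (T : SimpleGraph V) (htree : T.IsTree)
    (hadj : ∀ (g : G) (u v : V), T.Adj u v ↔ T.Adj (g • u) (g • v))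
    (hninv : ¬ ∃ (g : G) (u v : V), T.Adj u v ∧ g • u = v ∧ g • v = u)
    (S₁ S₂ : Set V) (h₁ : IsLowestBigTree G T S₁) (h₂ : IsLowestBigTree G T S₂)
    (hinf : ((PStab G S₁ ⊓ PStab G S₂ : Subgroup G) : Set G).Infinite) :
    S₁ = S₂ ∧ PStab G S₁ = PStab G S₂ :=
  lowestBigTree_eq_of_infinite_inter_pstab_general T htree hadj S₁ S₂ h₁ h₂ hinf
end

section
/- Let A, B, C be groups, let ι_A : C → A and ι_B : C → B be injective homomorphisms, and let G = A ∗_C B be the amalgamated free product (the pushout of ι_A and ι_B in the category of groups), with canonical homomorphisms j_A : A → G and j_B : B → G. Let N be a normal subgroup of B, let K be the normal closure of j_B(N) in G, let Ḡ = G/K, and let q : G → Ḡ be the quotient homomorphism. Assume ker(q ∘ j_B) = N. Then: (i) ker(q ∘ j_A) equals the normal closure in A of the set ι_A({c ∈ C : ι_B(c) ∈ N}); and (ii) writing Ā = A/ker(q ∘ j_A), B̄ = B/N and C̄ = C/ker(q ∘ j_A ∘ ι_A), the homomorphisms ι_A and ι_B descend to homomorphisms C̄ → Ā and C̄ → B̄,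 and the canonical homomorphism from the pushout Ā ∗_C̄ B̄ to Ḡ (induced by the maps Ā → Ḡ and B̄ → Ḡ coming from q ∘ j_A and q ∘ j_B) is an isomorphism. -/
/-!
Amalgamated products commute with quotients: for normal subgroups of `A`, `B`, `C` compatible
with the diagram, `G` modulo the normal closure of their images is the amalgamated product of
the three quotients. Let `M` be the normal closure of `ιA(ιB⁻¹ N)`. The hypothesis
`ker (q ∘ jB) = N` identifies `ker (q ∘ jA ∘ ιA)` with `ιB⁻¹ N` and makes both legs of
`A/M ← C/ιB⁻¹ N → B/N` injective; as the factors of an amalgamated product with injective legs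
embed into it (normal forms), `A/M` embeds into `Ḡ`, which is the hard inclusion
`ker (q ∘ jA) ≤ M` of (i). Part (ii) is the same quotient statement for `A/ker (q ∘ jA)`.
-/

universe u

/-- `(G, jA, jB)` is the amalgamated free product `A ∗_C B` over `ιA : C →* A` and
`ιB : C →* B`, i.e. the pushout of `ιA` and `ιB` in the category of groups, with canonical
homomorphisms `jA : A →* G` and `jB : B →* G`. -/
def IsAmalgamatedProduct {A B C G : Type u} [Group A] [Group B] [Group C] [Group G]
    (ιA : C →* A) (ιB : C →* B) (jA : A →* G) (jB : B →* G) : Prop :=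
  jA.comp ιA = jB.comp ιB ∧
    ∀ {H : Type u} [Group H] (fA : A →* H) (fB : B →* H),
      fA.comp ιA = fB.comp ιB → ∃! h : G →* H, h.comp jA = fA ∧ h.comp jB = fB

open Function

namespace QuotientGroup

theorem map_injective_of_comap_le {G H : Type*} [Group G] [Group H] {N : Subgroup G}
    [N.Normal] {M : Subgroup H} [M.Normal] {f : G →* H} (h : N ≤ M.comap f)
    (hMN : M.comap f ≤ N) : Injective (map N M f h) := by
  refine (injective_iff_map_eq_one _).2 fun x hx => ?_
  induction x using QuotientGroup.induction_on with
  | H g => exact (eq_one_iff g).2 (hMN ((eq_one_iff (f g)).1 hx))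

end QuotientGroup

/-- `A` and `B` as a `Bool`-indexed family, so that `A ∗_C B` is a `Monoid.PushoutI`. -/
def AmalgFactor (A B : Type u) : Bool → Type u
  | true => A
  | false => B

instance AmalgFactor.instGroup (A B : Type u) [Group A] [Group B] :
    ∀ b, Group (AmalgFactor A B b)
  | true => inferInstanceAs (Group A)
  | false => inferInstanceAs (Group B)

def amalgLeg {A B C : Type u} [Group A] [Group B] [Group C] (ιA : C →* A) (ιB : C →* B) :
    ∀ b, C →* AmalgFactor A B b
  | true => ιA
  | false => ιB

namespace IsAmalgamatedProduct

variable {A B C G : Type u} [Group A] [Group B] [Group C] [Group G]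
  {ιA : C →* A} {ιB : C →* B} {jA : A →* G} {jB : B →* G}

theorem hom_ext (hG : IsAmalgamatedProduct ιA ιB jA jB) {H : Type u} [Group H] {f g : G →* H}
    (hA : f.comp jA = g.comp jA) (hB : f.comp jB = g.comp jB) : f = g := by
  have hcompat : (f.comp jA).comp ιA = (f.comp jB).comp ιB := by
    rw [MonoidHom.comp_assoc, hG.1, MonoidHom.comp_assoc]
  exact (hG.2 _ _ hcompat).unique ⟨rfl, rfl⟩ ⟨hA.symm, hB.symm⟩

theorem injective_left (hG : IsAmalgamatedProduct ιA ιB jA jB) (hιA : Injective ιA)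
    (hιB : Injective ιB) : Injective jA := by
  let P := Monoid.PushoutI (amalgLeg ιA ιB)
  let ofA : A →* P := Monoid.PushoutI.of (φ := amalgLeg ιA ιB) true
  let ofB : B →* P := Monoid.PushoutI.of (φ := amalgLeg ιA ιB) false
  have hcompat : ofA.comp ιA = ofB.comp ιB := by
    ext c
    exact (Monoid.PushoutI.of_apply_eq_base (amalgLeg ιA ιB) true c).trans
      (Monoid.PushoutI.of_apply_eq_base (amalgLeg ιA ιB) false c).symm
  obtain ⟨h, ⟨hA, -⟩, -⟩ := hG.2 ofA ofB hcompat
  have hof : Injective ofA :=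
    Monoid.PushoutI.of_injective (fun b => by cases b <;> assumption) true
  rw [← hA, MonoidHom.coe_comp] at hof
  exact hof.of_comp

theorem quotient (hG : IsAmalgamatedProduct ιA ιB jA jB) (MA : Subgroup A) (MB : Subgroup B)
    (MC : Subgroup C) (K : Subgroup G) [MA.Normal] [MB.Normal] [MC.Normal] [K.Normal]
    (hCA : MC ≤ MA.comap ιA) (hCB : MC ≤ MB.comap ιB) (hAK : MA ≤ K.comap jA)
    (hBK : MB ≤ K.comap jB) (hK : K ≤ Subgroup.normalClosure (jA '' MA ∪ jB '' MB)) :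
    IsAmalgamatedProduct (QuotientGroup.map MC MA ιA hCA) (QuotientGroup.map MC MB ιB hCB)
      (QuotientGroup.map MA K jA hAK) (QuotientGroup.map MB K jB hBK) := by
  refine ⟨QuotientGroup.monoidHom_ext _ ?_, fun {H} _ fA fB hf => ?_⟩
  · ext c
    exact congrArg QuotientGroup.mk (DFunLike.congr_fun hG.1 c)
  have hF :
      (fA.comp (QuotientGroup.mk' MA)).comp ιA = (fB.comp (QuotientGroup.mk' MB)).comp ιB :=
    congrArg (·.comp (QuotientGroup.mk' MC)) hf
  obtain ⟨h, ⟨hA, hB⟩, -⟩ := hG.2 _ _ hF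
  have hKh : K ≤ h.ker := by
    refine hK.trans (Subgroup.normalClosure_le_normal ?_)
    rintro _ (⟨a, ha, rfl⟩ | ⟨b, hb, rfl⟩)
    · change (h.comp jA) a = 1
      rw [hA, MonoidHom.comp_apply, QuotientGroup.mk'_apply, (QuotientGroup.eq_one_iff a).2 ha,
        map_one]
    · change (h.comp jB) b = 1
      rw [hB, MonoidHom.comp_apply, QuotientGroup.mk'_apply, (QuotientGroup.eq_one_iff b).2 hb,
        map_one]
  refine ⟨QuotientGroup.lift K h hKh, ⟨?_, ?_⟩, fun h' ⟨hA', hB'⟩ => ?_⟩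
  · exact QuotientGroup.monoidHom_ext _ hA
  · exact QuotientGroup.monoidHom_ext _ hB
  refine QuotientGroup.monoidHom_ext _ (hG.hom_ext ?_ ?_)
  · rw [MonoidHom.comp_assoc, QuotientGroup.lift_comp_mk']
    exact (congrArg (·.comp (QuotientGroup.mk' MA)) hA').trans hA.symm
  · rw [MonoidHom.comp_assoc, QuotientGroup.lift_comp_mk']
    exact (congrArg (·.comp (QuotientGroup.mk' MB)) hB').trans hB.symm

end IsAmalgamatedProduct

theorem amalgam_quotient_general {A B C G : Type u} [Group A] [Group B] [Group C] [Group G]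
    (ιA : C →* A) (ιB : C →* B)
    (jA : A →* G) (jB : B →* G)
    (hpush : IsAmalgamatedProduct ιA ιB jA jB)
    (N : Subgroup B) [N.Normal]
    (hker : ((QuotientGroup.mk' (Subgroup.normalClosure
        ((N.map jB : Subgroup G) : Set G))).comp jB).ker = N) :
    ((QuotientGroup.mk' (Subgroup.normalClosure
          ((N.map jB : Subgroup G) : Set G))).comp jA).ker =
        Subgroup.normalClosure (⇑ιA '' {c : C | ιB c ∈ N}) ∧
      ∃ (ιA' : C ⧸ ((QuotientGroup.mk' (Subgroup.normalClosure
              ((N.map jB : Subgroup G) : Set G))).comp (jA.comp ιA)).ker →*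
            A ⧸ ((QuotientGroup.mk' (Subgroup.normalClosure
              ((N.map jB : Subgroup G) : Set G))).comp jA).ker)
        (ιB' : C ⧸ ((QuotientGroup.mk' (Subgroup.normalClosure
              ((N.map jB : Subgroup G) : Set G))).comp (jA.comp ιA)).ker →* B ⧸ N)
        (jA' : A ⧸ ((QuotientGroup.mk' (Subgroup.normalClosure
              ((N.map jB : Subgroup G) : Set G))).comp jA).ker →*
            G ⧸ Subgroup.normalClosure ((N.map jB : Subgroup G) : Set G))
        (jB' : B ⧸ N →* G ⧸ Subgroup.normalClosure ((N.map jB : Subgroup G) : Set G)),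
        (∀ c : C, ιA' (QuotientGroup.mk c) = QuotientGroup.mk (ιA c)) ∧
        (∀ c : C, ιB' (QuotientGroup.mk c) = QuotientGroup.mk (ιB c)) ∧
        (∀ a : A, jA' (QuotientGroup.mk a) = QuotientGroup.mk (jA a)) ∧
        (∀ b : B, jB' (QuotientGroup.mk b) = QuotientGroup.mk (jB b)) ∧
        IsAmalgamatedProduct ιA' ιB' jA' jB' := by
  set K := Subgroup.normalClosure ((N.map jB : Subgroup G) : Set G)
  set q := QuotientGroup.mk' K
  set M := Subgroup.normalClosure (ιA '' {c : C | ιB c ∈ N})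
  have hqC : (q.comp (jA.comp ιA)).ker = N.comap ιB := by
    rw [hpush.1, ← MonoidHom.comp_assoc, ← MonoidHom.comap_ker, hker]
  have hMK : M ≤ (q.comp jA).ker := by
    refine Subgroup.normalClosure_le_normal ?_
    rintro _ ⟨c, hc, rfl⟩
    exact hqC.ge hc
  have hAK : (q.comp jA).ker ≤ K.comap jA := fun a ha => (QuotientGroup.eq_one_iff (jA a)).1 ha
  have hBK : N ≤ K.comap jB := fun b hb => Subgroup.subset_normalClosure ⟨b, hb, rfl⟩
  have hK : ∀ MA : Subgroup A, K ≤ Subgroup.normalClosure (jA '' MA ∪ jB '' N) := fun _ =>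
    Subgroup.normalClosure_mono (by rw [Subgroup.coe_map]; exact Set.subset_union_right)
  have hCA : (q.comp (jA.comp ιA)).ker ≤ M.comap ιA := fun c hc =>
    Subgroup.subset_normalClosure ⟨c, hqC.le hc, rfl⟩
  have hMC : M.comap ιA ≤ (q.comp (jA.comp ιA)).ker := fun _ hc => hMK hc
  have hkerA : (q.comp jA).ker = M := by
    refine le_antisymm (fun a ha => ?_) hMK
    have hinj := (hpush.quotient M N _ K hCA hqC.le (hMK.trans hAK) hBK (hK M)).injective_left
      (QuotientGroup.map_injective_of_comap_le hCA hMC)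
      (QuotientGroup.map_injective_of_comap_le hqC.le hqC.ge)
    exact (QuotientGroup.eq_one_iff a).1 ((injective_iff_map_eq_one _).1 hinj _ ha)
  exact ⟨hkerA, _, _, _, _, fun _ => rfl, fun _ => rfl, fun _ => rfl, fun _ => rfl,
    hpush.quotient (q.comp jA).ker N (q.comp (jA.comp ιA)).ker K (fun _ hc => hc) hqC.le
      hAK hBK (hK _)⟩

/-- let `G = A ∗_C B`, let `N ⊴ B`, let `K` be the normal closure of `jB(N)` in
`G`, `Ḡ = G/K` and `q : G → Ḡ`, and assume `ker (q ∘ jB) = N`.  Then (i) `ker (q ∘ jA)` is the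
normal closure in `A` of `ιA({c : ιB c ∈ N})`; and (ii) `ιA`, `ιB` descend to homomorphisms
`C̄ → Ā`, `C̄ → B̄` (where `Ā = A/ker(q∘jA)`, `B̄ = B/N`, `C̄ = C/ker(q∘jA∘ιA)`), and `Ḡ`,
with the induced maps, is the pushout `Ā ∗_C̄ B̄` (equivalently, the canonical homomorphism
from the pushout to `Ḡ` is an isomorphism). -/
theorem amalgam_quotient {A B C G : Type u} [Group A] [Group B] [Group C] [Group G]
    (ιA : C →* A) (ιB : C →* B)
    (hιA : Function.Injective ιA) (hιB : Function.Injective ιB)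
    (jA : A →* G) (jB : B →* G)
    (hpush : IsAmalgamatedProduct ιA ιB jA jB)
    (N : Subgroup B) [N.Normal]
    (hker : ((QuotientGroup.mk' (Subgroup.normalClosure
        ((N.map jB : Subgroup G) : Set G))).comp jB).ker = N) :
    ((QuotientGroup.mk' (Subgroup.normalClosure
          ((N.map jB : Subgroup G) : Set G))).comp jA).ker =
        Subgroup.normalClosure (⇑ιA '' {c : C | ιB c ∈ N}) ∧
      ∃ (ιA' : C ⧸ ((QuotientGroup.mk' (Subgroup.normalClosure
              ((N.map jB : Subgroup G) : Set G))).comp (jA.comp ιA)).ker →*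
            A ⧸ ((QuotientGroup.mk' (Subgroup.normalClosure
              ((N.map jB : Subgroup G) : Set G))).comp jA).ker)
        (ιB' : C ⧸ ((QuotientGroup.mk' (Subgroup.normalClosure
              ((N.map jB : Subgroup G) : Set G))).comp (jA.comp ιA)).ker →* B ⧸ N)
        (jA' : A ⧸ ((QuotientGroup.mk' (Subgroup.normalClosure
              ((N.map jB : Subgroup G) : Set G))).comp jA).ker →*
            G ⧸ Subgroup.normalClosure ((N.map jB : Subgroup G) : Set G))
        (jB' : B ⧸ N →* G ⧸ Subgroup.normalClosure ((N.map jB : Subgroup G) : Set G)),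
        (∀ c : C, ιA' (QuotientGroup.mk c) = QuotientGroup.mk (ιA c)) ∧
        (∀ c : C, ιB' (QuotientGroup.mk c) = QuotientGroup.mk (ιB c)) ∧
        (∀ a : A, jA' (QuotientGroup.mk a) = QuotientGroup.mk (jA a)) ∧
        (∀ b : B, jB' (QuotientGroup.mk b) = QuotientGroup.mk (jB b)) ∧
        IsAmalgamatedProduct ιA' ιB' jA' jB' :=
  amalgam_quotient_general ιA ιB jA jB hpush N hker
end

section
/- For every g ∈ G such that φ(A₁)^{φ(g)} ∩ φ(A₂) is infinite, there exists g' ∈ G with φ(g') = φ(g) and φ(A₁^{g'} ∩ A₂) = φ(A₁)^{φ(g)} ∩ φ(A₂). -/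
/-- Conjugation of a subgroup: `conjPow H g = H^g = g⁻¹ H g`. -/
def conjPow {G : Type*} [Group G] (H : Subgroup G) (g : G) : Subgroup G :=
  H.map (MulAut.conj g⁻¹).toMonoidHom

/-- The double coset `P x Q = {p * x * q : p ∈ P, q ∈ Q}`. -/
def doubleCoset {G : Type*} [Group G] (P : Subgroup G) (x : G) (Q : Subgroup G) : Set G :=
  {y | ∃ p ∈ P, ∃ q ∈ Q, y = p * x * q}

/-!
Hypothesis (b) writes `φ x = φ a₁ * φ (g i) * φ a₂` with `aₖ ∈ Aₖ`, and `x' := a₁ * g i * a₂` works: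
conjugating by elements of `A₁` and `A₂` does not change them, so `A₁^{x'} ∩ A₂ = (A₁^{g i} ∩ A₂)^{a₂}`,
and the same identity downstairs turns hypothesis (a) for `i` into the claim.
-/

section

open scoped Pointwise

variable {G H : Type*} [Group G] [Group H]

lemma conjPow_eq_smul (K : Subgroup G) (g : G) : conjPow K g = MulAut.conj g⁻¹ • K := rfl

lemma conjPow_mul (K : Subgroup G) (a b : G) : conjPow K (a * b) = conjPow (conjPow K a) b := by
  simp only [conjPow_eq_smul, mul_inv_rev, map_mul, mul_smul]

lemma conjPow_eq_self_of_mem {K : Subgroup G} {a : G} (ha : a ∈ K) : conjPow K a = K :=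
  Subgroup.conj_smul_eq_self_of_mem (K.inv_mem ha)

lemma conjPow_inf (K L : Subgroup G) (a : G) : conjPow (K ⊓ L) a = conjPow K a ⊓ conjPow L a :=
  Subgroup.smul_inf (MulAut.conj a⁻¹) K L

lemma map_conjPow (φ : G →* H) (K : Subgroup G) (a : G) :
    (conjPow K a).map φ = conjPow (K.map φ) (φ a) := by
  simp only [conjPow, Subgroup.map_map]
  congr 1
  ext
  simp

lemma conjPow_mul_mul_inf {K L : Subgroup G} {a b : G} (ha : a ∈ K) (hb : b ∈ L) (g : G) :
    conjPow K (a * g * b) ⊓ L = conjPow (conjPow K g ⊓ L) b := by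
  rw [conjPow_inf, conjPow_mul, conjPow_mul, conjPow_eq_self_of_mem ha, conjPow_eq_self_of_mem hb]

lemma mem_doubleCoset_self (P Q : Subgroup G) (x : G) : x ∈ doubleCoset P x Q :=
  ⟨1, P.one_mem, 1, Q.one_mem, by simp⟩

lemma exists_eq_map_of_mem_doubleCoset_map (φ : G →* H) {K L : Subgroup G} {g : G} {y : H}
    (hy : y ∈ doubleCoset (K.map φ) (φ g) (L.map φ)) : ∃ a ∈ K, ∃ b ∈ L, y = φ (a * g * b) := by
  obtain ⟨-, ⟨a, ha, rfl⟩, -, ⟨b, hb, rfl⟩, rfl⟩ := hy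
  exact ⟨a, ha, b, hb, by simp only [map_mul]⟩

end

/-- under hypotheses (a) and (b), for every `g ∈ G` with
`φ(A₁)^{φ(g)} ∩ φ(A₂)` infinite there is `g'` with `φ(g') = φ(g)` and
`φ(A₁^{g'} ∩ A₂) = φ(A₁)^{φ(g)} ∩ φ(A₂)`. -/
theorem exists_rep_of_infinite_inter_image {G Gb : Type*} [Group G] [Group Gb]
    (φ : G →* Gb) (A₁ A₂ : Subgroup G) {I : Type*} (g : I → G)
    (ha : ∀ i : I, (conjPow A₁ (g i) ⊓ A₂).map φ =
      conjPow (A₁.map φ) (φ (g i)) ⊓ A₂.map φ)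
    (hb : ∀ x : G,
      ((conjPow (A₁.map φ) (φ x) ⊓ A₂.map φ : Subgroup Gb) : Set Gb).Infinite →
      ∃ i : I, doubleCoset (A₁.map φ) (φ x) (A₂.map φ) =
        doubleCoset (A₁.map φ) (φ (g i)) (A₂.map φ)) :
    ∀ x : G,
      ((conjPow (A₁.map φ) (φ x) ⊓ A₂.map φ : Subgroup Gb) : Set Gb).Infinite →
      ∃ x' : G, φ x' = φ x ∧
        (conjPow A₁ x' ⊓ A₂).map φ = conjPow (A₁.map φ) (φ x) ⊓ A₂.map φ := by
  intro x hx
  obtain ⟨i, hi⟩ := hb x hx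
  obtain ⟨a₁, ha₁, a₂, ha₂, hx⟩ :=
    exists_eq_map_of_mem_doubleCoset_map φ (hi ▸ mem_doubleCoset_self _ _ (φ x))
  refine ⟨a₁ * g i * a₂, hx.symm, ?_⟩
  rw [conjPow_mul_mul_inf ha₁ ha₂, map_conjPow, ha i, hx, map_mul, map_mul,
    conjPow_mul_mul_inf (Subgroup.mem_map_of_mem φ ha₁) (Subgroup.mem_map_of_mem φ ha₂)]
end

section
/- In H = BS(1,2), for every n ∈ ℕ the subgroup t⁻ⁿ ⟨of(a)⟩ tⁿ is properly contained in t⁻⁽ⁿ⁺¹⁾ ⟨of(a)⟩ tⁿ⁺¹. Consequently, for every d ∈ ℕ there is a strictly increasing chain L₁ < L₂ < ⋯ < L_d of subgroups of H in which each L_i is a conjugate of ⟨of(a)⟩ (in particular an intersection of finitely many conjugates of ⟨of(a)⟩); hence the collection {⟨of(a)⟩} has infinite commensurable depth in BS(1,2). -/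
/-!
In `BS(1,2)` the stable letter conjugates `⟨a⟩` into itself, `t a t⁻¹ = a²`, so
`⟨a⟩ ≤ t⁻¹ ⟨a⟩ t`. The inclusion is strict: `t⁻¹ a t = aᵏ` would give `a = a²ᵏ`, impossible
for an element of infinite order. Conjugating by further powers of `t⁻¹` turns this single
strict inclusion into an infinite strictly increasing chain of conjugates of `⟨a⟩`.
-/

section ConjChain

variable {G : Type*} [Group G]

theorem zpowers_lt_map_conj_inv_of_conj_eq_zpow {g t : G} {m : ℤ} (hg : ¬IsOfFinOrder g)
    (hm₁ : m ≠ 1) (hm₂ : m ≠ -1) (hconj : t * g * t⁻¹ = g ^ m) :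
    Subgroup.zpowers g < (Subgroup.zpowers g).map (MulAut.conj t⁻¹).toMonoidHom := by
  have hle : Subgroup.zpowers g ≤ (Subgroup.zpowers g).map (MulAut.conj t⁻¹).toMonoidHom := by
    rw [Subgroup.zpowers_le]
    exact ⟨g ^ m, Subgroup.zpow_mem_zpowers g m, by simp [← hconj, mul_assoc]⟩
  refine lt_of_le_not_ge hle fun hge => ?_
  obtain ⟨k, hk : g ^ k = t⁻¹ * g * t⟩ : t⁻¹ * g * t ∈ Subgroup.zpowers g :=
    hge ⟨g, Subgroup.mem_zpowers g, by simp⟩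
  have hgk : g ^ (m * k) = g ^ (1 : ℤ) :=
    calc g ^ (m * k) = (t * g * t⁻¹) ^ k := by rw [zpow_mul, hconj]
      _ = t * g ^ k * t⁻¹ := conj_zpow
      _ = g ^ (1 : ℤ) := by rw [hk]; group
  rcases Int.eq_one_or_neg_one_of_mul_eq_one (injective_zpow_iff_not_isOfFinOrder.mpr hg hgk)
    with h | h
  exacts [hm₁ h, hm₂ h]

theorem strictMono_map_conj_pow {S : Subgroup G} {x : G}
    (h : S < S.map (MulAut.conj x).toMonoidHom) :
    StrictMono fun n : ℕ => S.map (MulAut.conj (x ^ n)).toMonoidHom := by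
  refine strictMono_nat_of_lt_succ fun n => ?_
  have hsucc : S.map (MulAut.conj (x ^ (n + 1))).toMonoidHom =
      (S.map (MulAut.conj x).toMonoidHom).map (MulAut.conj (x ^ n)).toMonoidHom := by
    rw [Subgroup.map_map, pow_succ, map_mul]
    rfl
  rw [hsucc, Subgroup.map_lt_map_iff_of_injective (MulAut.conj (x ^ n)).injective]
  exact h

end ConjChain

theorem HNNExtension.isOfFinOrder_of_iff {C : Type*} [Group C] {A B : Subgroup C}
    {φ : A ≃* B} {c : C} :
    IsOfFinOrder (of c : HNNExtension C A B φ) ↔ IsOfFinOrder c :=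
  (of_injective φ).isOfFinOrder_iff

theorem bs12_infinite_commensurable_depth_general {C : Type*} [Group C] (a : C)
    (hord : ¬ IsOfFinOrder a)
    (φ : (⊤ : Subgroup C) ≃* Subgroup.zpowers (a ^ 2))
    (hφ : ((φ ⟨a, Subgroup.mem_top a⟩ : Subgroup.zpowers (a ^ 2)) : C) = a ^ 2) :
    (∀ n : ℕ,
      (Subgroup.zpowers
            ((HNNExtension.of a : HNNExtension C ⊤ (Subgroup.zpowers (a ^ 2)) φ))).map
          (MulAut.conj ((HNNExtension.t : HNNExtension C ⊤ (Subgroup.zpowers (a ^ 2)) φ)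
              ^ n)⁻¹).toMonoidHom <
        (Subgroup.zpowers
            ((HNNExtension.of a : HNNExtension C ⊤ (Subgroup.zpowers (a ^ 2)) φ))).map
          (MulAut.conj ((HNNExtension.t : HNNExtension C ⊤ (Subgroup.zpowers (a ^ 2)) φ)
              ^ (n + 1))⁻¹).toMonoidHom) ∧
    ∀ d : ℕ, ∃ L : Fin d → Subgroup (HNNExtension C ⊤ (Subgroup.zpowers (a ^ 2)) φ),
      StrictMono L ∧ ∀ i : Fin d, ∃ g : HNNExtension C ⊤ (Subgroup.zpowers (a ^ 2)) φ,
        L i = (Subgroup.zpowers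
            ((HNNExtension.of a : HNNExtension C ⊤ (Subgroup.zpowers (a ^ 2)) φ))).map
          (MulAut.conj g).toMonoidHom := by
  have hrel : (HNNExtension.t * HNNExtension.of a * HNNExtension.t⁻¹ :
      HNNExtension C ⊤ (Subgroup.zpowers (a ^ 2)) φ) = HNNExtension.of a ^ (2 : ℤ) := by
    rw [← HNNExtension.equiv_eq_conj (⟨a, Subgroup.mem_top a⟩ : (⊤ : Subgroup C)), hφ]
    simp
  have hstep := zpowers_lt_map_conj_inv_of_conj_eq_zpow
    (HNNExtension.isOfFinOrder_of_iff.not.mpr hord) (by decide) (by decide) hrel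
  have hchain := strictMono_map_conj_pow hstep
  simp only [← inv_pow] at hchain ⊢
  exact ⟨fun n => hchain n.lt_succ_self,
    fun d => ⟨_, hchain.comp Fin.val_strictMono, fun i => ⟨_, rfl⟩⟩⟩

/-- Let `C = ⟨a⟩` be infinite cyclic, `B = ⟨a²⟩`, and `φ : C ≃ B` the isomorphism
with `φ(a) = a²`.  In the HNN extension `H = BS(1,2)` of `C` over `φ` (with stable letter `t`
and relations `t x t⁻¹ = φ(x)`), the subgroup `t⁻ⁿ ⟨of a⟩ tⁿ` is properly contained in
`t⁻⁽ⁿ⁺¹⁾ ⟨of a⟩ tⁿ⁺¹` for every `n`.  Consequently, for every `d` there is a strictly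
increasing chain of `d` subgroups of `H`, each a conjugate of `⟨of a⟩`; hence `{⟨of a⟩}` has
infinite commensurable depth in `BS(1,2)`. -/
theorem bs12_infinite_commensurable_depth {C : Type*} [Group C] (a : C)
    (hgen : ∀ x : C, x ∈ Subgroup.zpowers a) (hord : ¬ IsOfFinOrder a)
    (φ : (⊤ : Subgroup C) ≃* Subgroup.zpowers (a ^ 2))
    (hφ : ((φ ⟨a, Subgroup.mem_top a⟩ : Subgroup.zpowers (a ^ 2)) : C) = a ^ 2) :
    (∀ n : ℕ,
      (Subgroup.zpowers
            ((HNNExtension.of a : HNNExtension C ⊤ (Subgroup.zpowers (a ^ 2)) φ))).map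
          (MulAut.conj ((HNNExtension.t : HNNExtension C ⊤ (Subgroup.zpowers (a ^ 2)) φ)
              ^ n)⁻¹).toMonoidHom <
        (Subgroup.zpowers
            ((HNNExtension.of a : HNNExtension C ⊤ (Subgroup.zpowers (a ^ 2)) φ))).map
          (MulAut.conj ((HNNExtension.t : HNNExtension C ⊤ (Subgroup.zpowers (a ^ 2)) φ)
              ^ (n + 1))⁻¹).toMonoidHom) ∧
    ∀ d : ℕ, ∃ L : Fin d → Subgroup (HNNExtension C ⊤ (Subgroup.zpowers (a ^ 2)) φ),
      StrictMono L ∧ ∀ i : Fin d, ∃ g : HNNExtension C ⊤ (Subgroup.zpowers (a ^ 2)) φ,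
        L i = (Subgroup.zpowers
            ((HNNExtension.of a : HNNExtension C ⊤ (Subgroup.zpowers (a ^ 2)) φ))).map
          (MulAut.conj g).toMonoidHom :=
  bs12_infinite_commensurable_depth_general a hord φ hφ
end

section
/- Let S̄₁ ⊆ S̄₂ be finite subtrees of T̄ with PStab(S̄₂) infinite, and let S₁ be a finite subtree of T such that f restricts to an isomorphism of induced subgraphs from S₁ onto S̄₁ and φ(PStab(S₁)) = PStab(S̄₁). Then there exists a finite subtree S₂ of T with S₁ ⊆ S₂ such that f restricts to an isomorphism of induced subgraphs from S₂ onto S̄₂ and φ(PStab(S₂)) = PStab(S̄₂). -/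
/-!
Grow `S̄₁` towards `S̄₂` one vertex at a time, along an edge `(f v, w̄)` leaving it with `v ∈ S₁`.
Property (v) lifts this edge to an edge `(v, u)`. Since `PStab(S̄₁ ∪ {w̄})` contains the infinite
group `PStab(S̄₂)`, the intersection-lifting hypothesis gives `g` in the kernel of `φ` fixing `v`,
and `S₁ ∪ {g • u}` has pointwise stabilizer mapping onto `PStab(S̄₁ ∪ {w̄})`. As `T̄` is a tree,
`w̄` has no neighbour in `S̄₁` besides `f v`, so `f` is still an isomorphism on the enlarged subtree.
-/

open MulAction Pointwise

/-- `f` restricts to an isomorphism of induced subgraphs from `S` onto `S'`: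
it maps `S` bijectively onto `S'`, preserving and reflecting adjacency. -/
def RestrictsToIso {V W : Type*} (T : SimpleGraph V) (T' : SimpleGraph W)
    (f : V → W) (S : Set V) (S' : Set W) : Prop :=
  Set.BijOn f S S' ∧ ∀ u ∈ S, ∀ v ∈ S, (T.Adj u v ↔ T'.Adj (f u) (f v))

section PStab

variable (G : Type*) [Group G] {V : Type*} [MulAction G V]

lemma PStab_anti {S S' : Set V} (h : S ⊆ S') : PStab G S' ≤ PStab G S :=
  le_iInf₂ fun _ hv => biInf_le _ (h hv)

lemma PStab_le_stabilizer {S : Set V} {v : V} (hv : v ∈ S) :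
    PStab G S ≤ stabilizer G v :=
  biInf_le _ hv

lemma PStab_insert (w : V) (S : Set V) :
    PStab G (insert w S) = stabilizer G w ⊓ PStab G S := by
  rw [PStab, PStab, iInf_insert]

lemma PStab_insert_eq_inf_of_mem {S : Set V} {v : V} (hv : v ∈ S) (w : V) :
    PStab G (insert w S) = (stabilizer G v ⊓ stabilizer G w) ⊓ PStab G S := by
  rw [PStab_insert, inf_comm (stabilizer G v), inf_assoc,
    inf_eq_right.mpr (PStab_le_stabilizer G hv)]

variable {G}

lemma conjSub_stabilizer_inf (g : G) (a b : V) :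
    conjSub g (stabilizer G a ⊓ stabilizer G b) = stabilizer G (g • a) ⊓ stabilizer G (g • b) := by
  rw [conjSub, Subgroup.map_inf _ _ _ (MulAut.conj g).injective,
    stabilizer_smul_eq_stabilizer_map_conj, stabilizer_smul_eq_stabilizer_map_conj]

end PStab

namespace SimpleGraph

variable {V : Type*} {G : SimpleGraph V}

lemma exists_adj_mem_sdiff_of_connected_induce {S S' : Set V} (hS' : (G.induce S').Connected)
    (hSS' : S ⊆ S') (hS : S.Nonempty) (hne : (S' \ S).Nonempty) :
    ∃ v ∈ S, ∃ w ∈ S' \ S, G.Adj v w := by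
  obtain ⟨a, ha⟩ := hS
  obtain ⟨b, hb⟩ := hne
  obtain ⟨p⟩ := hS' ⟨a, hSS' ha⟩ ⟨b, hb.1⟩
  obtain ⟨d, -, hd, hd'⟩ := p.exists_boundary_dart {x | x.1 ∈ S} ha hb.2
  exact ⟨_, hd, _, ⟨d.snd.2, hd'⟩, d.adj⟩

lemma connected_induce_insert {S : Set V} (hS : (G.induce S).Connected) {v w : V} (hv : v ∈ S)
    (hvw : G.Adj v w) : (G.induce (insert w S)).Connected := by
  have hunion : S ∪ {v, w} = insert w S := by
    ext x
    simp only [Set.mem_union, Set.mem_insert_iff, Set.mem_singleton_iff]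
    grind
  rw [← hunion]
  exact induce_union_connected hS.preconnected (induce_pair_connected_of_adj hvw).preconnected
    ⟨v, hv, Set.mem_insert _ _⟩

/-- Otherwise the two edges at `w` and a path inside `S` would close a cycle. -/
lemma IsAcyclic.eq_of_adj_of_connected_induce (hG : G.IsAcyclic) {S : Set V}
    (hS : (G.induce S).Connected) {a b w : V} (ha : a ∈ S) (hb : b ∈ S) (hw : w ∉ S)
    (haw : G.Adj a w) (hbw : G.Adj b w) : a = b := by
  classical
  by_contra hab
  obtain ⟨p⟩ := hS ⟨a, ha⟩ ⟨b, hb⟩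
  let q : G.Path a b := (p.map (Embedding.induce S).toHom).toPath
  have hwq : w ∉ q.1.support := fun h => by
    obtain ⟨x, -, hx⟩ := List.mem_map.mp
      (Walk.support_map _ _ ▸ Walk.support_bypass_subset_support _ h)
    exact hw (hx ▸ x.2)
  let r : G.Path a b := ⟨.cons haw (.cons hbw.symm .nil), by
    simp [Walk.isPath_def, haw.ne, hab, hbw.ne']⟩
  exact hwq ((hG.subsingleton_path a b).elim r q ▸ by simp [r])

end SimpleGraph

lemma IsSubtree.insert {V : Type*} {T : SimpleGraph V} {S : Set V} (hS : IsSubtree T S) {v w : V}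
    (hv : v ∈ S) (hvw : T.Adj v w) : IsSubtree T (insert w S) :=
  ⟨Set.insert_nonempty _ _, T.connected_induce_insert hS.2 hv hvw⟩

section Lifting

variable {G Gb V Vb : Type*} [Group G] [Group Gb] [MulAction G V] [MulAction Gb Vb]
  {T : SimpleGraph V} {Tb : SimpleGraph Vb} {φ : G →* Gb} {f : V → Vb}

def IntersectionLifting (T : SimpleGraph V) (φ : G →* Gb) : Prop :=
  ∀ (v u : V), T.Adj v u → ∀ S : Set V, S.Finite → IsSubtree T S → v ∈ S →
    ((((stabilizer G v ⊓ stabilizer G u).map φ ⊓ (PStab G S).map φ : Subgroup Gb) :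
        Set Gb).Infinite →
      ∃ g ∈ stabilizer G v, φ g = 1 ∧
        (conjSub g (stabilizer G v ⊓ stabilizer G u) ⊓ PStab G S).map φ =
          (stabilizer G v ⊓ stabilizer G u).map φ ⊓ (PStab G S).map φ)

lemma RestrictsToIso.insert (hTb : Tb.IsAcyclic) (hf : ∀ u v, T.Adj u v → Tb.Adj (f u) (f v))
    {S : Set V} {Sb : Set Vb} (h : RestrictsToIso T Tb f S Sb) (hSb : (Tb.induce Sb).Connected)
    {v w : V} (hv : v ∈ S) (hvw : T.Adj v w) (hw : f w ∉ Sb) :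
    RestrictsToIso T Tb f (insert w S) (insert (f w) Sb) := by
  have hadj_new : ∀ u ∈ S, T.Adj u w ↔ Tb.Adj (f u) (f w) := fun u hu =>
    ⟨hf u w, fun hfu => by
      rwa [h.1.injOn hu hv <| hTb.eq_of_adj_of_connected_induce hSb (h.1.mapsTo hu)
        (h.1.mapsTo hv) hw hfu (hf v w hvw)]⟩
  refine ⟨h.1.insert hw, ?_⟩
  rintro a (rfl | ha) b (rfl | hb)
  · simp
  · rw [T.adj_comm, Tb.adj_comm]
    exact hadj_new b hb
  · exact hadj_new a ha
  · exact h.2 a ha b hb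

lemma exists_adj_map_PStab_insert (hadj : ∀ (g : G) (u v : V), T.Adj u v ↔ T.Adj (g • u) (g • v))
    (hf_smul : ∀ (g : G) (v : V), f (g • v) = φ g • f v)
    (hstab_edge : ∀ u v : V, T.Adj u v →
      (stabilizer G u ⊓ stabilizer G v).map φ = stabilizer Gb (f u) ⊓ stabilizer Gb (f v))
    (hlift_edge : ∀ (v : V) (wb : Vb), Tb.Adj (f v) wb → ∃ w : V, T.Adj v w ∧ f w = wb)
    (hlift : IntersectionLifting T φ) {S : Set V} (hSfin : S.Finite) (hS : IsSubtree T S)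
    {Sb : Set Vb} (hps : (PStab G S).map φ = PStab Gb Sb) {v : V} (hv : v ∈ S) (hfv : f v ∈ Sb)
    {wb : Vb} (hvw : Tb.Adj (f v) wb) (hinf : (PStab Gb (insert wb Sb) : Set Gb).Infinite) :
    ∃ w, T.Adj v w ∧ f w = wb ∧ (PStab G (insert w S)).map φ = PStab Gb (insert wb Sb) := by
  obtain ⟨u, hvu, rfl⟩ := hlift_edge v wb hvw
  have hPStab_image : PStab Gb (insert (f u) Sb) =
      (stabilizer G v ⊓ stabilizer G u).map φ ⊓ (PStab G S).map φ := by
    rw [PStab_insert_eq_inf_of_mem Gb hfv, hstab_edge v u hvu, hps]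
  obtain ⟨g, hg, hφg, hmap⟩ := hlift v u hvu S hSfin hS hv (hPStab_image ▸ hinf)
  have hgv : g • v = v := hg
  refine ⟨g • u, hgv ▸ (hadj g v u).mp hvu, by rw [hf_smul, hφg, one_smul], ?_⟩
  rw [hPStab_image, ← hmap, conjSub_stabilizer_inf, hgv, PStab_insert_eq_inf_of_mem G hv]

end Lifting

theorem lift_finite_subtree_general {G Gb V Vb : Type*} [Group G] [Group Gb]
    [MulAction G V] [MulAction Gb Vb]
    (T : SimpleGraph V) (Tb : SimpleGraph Vb)
    (htreeb : Tb.IsTree)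
    (hadj : ∀ (g : G) (u v : V), T.Adj u v ↔ T.Adj (g • u) (g • v))
    (φ : G →* Gb) (f : V → Vb)
    -- (i) f maps adjacent vertices to adjacent vertices
    (h1 : ∀ u v : V, T.Adj u v → Tb.Adj (f u) (f v))
    -- (ii) f is equivariant
    (h2 : ∀ (g : G) (v : V), f (g • v) = φ g • f v)
    -- (iv) φ maps edge pointwise-stabilizers onto edge pointwise-stabilizers
    (h4 : ∀ u v : V, T.Adj u v →
      (MulAction.stabilizer G u ⊓ MulAction.stabilizer G v).map φ =
        MulAction.stabilizer Gb (f u) ⊓ MulAction.stabilizer Gb (f v))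
    -- (v) edges at f v lift to edges at v
    (h5 : ∀ (v : V) (wb : Vb), Tb.Adj (f v) wb → ∃ w : V, T.Adj v w ∧ f w = wb)
    -- intersection-lifting hypothesis
    (hlift : ∀ (v u : V), T.Adj v u → ∀ S : Set V, S.Finite → IsSubtree T S → v ∈ S →
      ((((MulAction.stabilizer G v ⊓ MulAction.stabilizer G u).map φ ⊓
          (PStab G S).map φ : Subgroup Gb) : Set Gb).Infinite →
        ∃ g ∈ MulAction.stabilizer G v, φ g = 1 ∧
          (conjSub g (MulAction.stabilizer G v ⊓ MulAction.stabilizer G u) ⊓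
            PStab G S).map φ =
          (MulAction.stabilizer G v ⊓ MulAction.stabilizer G u).map φ ⊓ (PStab G S).map φ))
    (Sb1 Sb2 : Set Vb) (hss : Sb1 ⊆ Sb2)
    (hSb2fin : Sb2.Finite)
    (hSb1 : IsSubtree Tb Sb1) (hSb2 : IsSubtree Tb Sb2)
    (hinf : ((PStab Gb Sb2 : Subgroup Gb) : Set Gb).Infinite)
    (S1 : Set V) (hS1fin : S1.Finite) (hS1 : IsSubtree T S1)
    (hiso1 : RestrictsToIso T Tb f S1 Sb1)
    (hps1 : (PStab G S1).map φ = PStab Gb Sb1) :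
    ∃ S2 : Set V, S1 ⊆ S2 ∧ S2.Finite ∧ IsSubtree T S2 ∧
      RestrictsToIso T Tb f S2 Sb2 ∧ (PStab G S2).map φ = PStab Gb Sb2 := by
  induction hn : (Sb2 \ Sb1).ncard generalizing Sb1 S1 with
  | zero =>
    obtain rfl : Sb1 = Sb2 :=
      hss.antisymm (Set.sdiff_eq_empty.mp ((Set.ncard_eq_zero hSb2fin.sdiff).mp hn))
    exact ⟨S1, subset_rfl, hS1fin, hS1, hiso1, hps1⟩
  | succ n ih =>
    obtain ⟨_, hvb, wb, ⟨hwb2, hwb1⟩, hvwb⟩ := Tb.exists_adj_mem_sdiff_of_connected_induce hSb2.2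
      hss hSb1.1 (Set.nonempty_of_ncard_ne_zero (by omega))
    obtain ⟨v, hv, rfl⟩ := hiso1.1.surjOn hvb
    have hss' : insert wb Sb1 ⊆ Sb2 := Set.insert_subset hwb2 hss
    obtain ⟨w, hvw, rfl, hps⟩ := exists_adj_map_PStab_insert hadj h2 h4 h5 hlift hS1fin hS1 hps1
      hv hvb hvwb (hinf.mono (PStab_anti Gb hss'))
    have hn' : (Sb2 \ insert (f w) Sb1).ncard = n := by
      rw [← Set.union_singleton, ← Set.sdiff_sdiff,
        Set.ncard_sdiff_singleton_of_mem (s := Sb2 \ Sb1) ⟨hwb2, hwb1⟩, hn, Nat.add_sub_cancel]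
    obtain ⟨S2, hS12, hS2⟩ := ih _ hss' (hSb1.insert hvb hvwb) _ (hS1fin.insert w)
      (hS1.insert hv hvw) (hiso1.insert htreeb.isAcyclic h1 hSb1.2 hv hvw hwb1) hps hn'
    exact ⟨S2, (Set.subset_insert _ _).trans hS12, hS2⟩

/-- lifting of finite subtrees with prescribed pointwise stabilizers along a
quotient of graphs of groups. -/
theorem lift_finite_subtree {G Gb V Vb : Type*} [Group G] [Group Gb]
    [MulAction G V] [MulAction Gb Vb]
    (T : SimpleGraph V) (Tb : SimpleGraph Vb)
    (htree : T.IsTree) (htreeb : Tb.IsTree)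
    (hadj : ∀ (g : G) (u v : V), T.Adj u v ↔ T.Adj (g • u) (g • v))
    (hninv : ¬ ∃ (g : G) (u v : V), T.Adj u v ∧ g • u = v ∧ g • v = u)
    (hadjb : ∀ (g : Gb) (u v : Vb), Tb.Adj u v ↔ Tb.Adj (g • u) (g • v))
    (hninvb : ¬ ∃ (g : Gb) (u v : Vb), Tb.Adj u v ∧ g • u = v ∧ g • v = u)
    (φ : G →* Gb) (hφ : Function.Surjective φ) (f : V → Vb)
    -- (i) f maps adjacent vertices to adjacent vertices
    (h1 : ∀ u v : V, T.Adj u v → Tb.Adj (f u) (f v))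
    -- (ii) f is equivariant
    (h2 : ∀ (g : G) (v : V), f (g • v) = φ g • f v)
    -- (iii) φ maps vertex stabilizers onto vertex stabilizers
    (h3 : ∀ v : V, (MulAction.stabilizer G v).map φ = MulAction.stabilizer Gb (f v))
    -- (iv) φ maps edge pointwise-stabilizers onto edge pointwise-stabilizers
    (h4 : ∀ u v : V, T.Adj u v →
      (MulAction.stabilizer G u ⊓ MulAction.stabilizer G v).map φ =
        MulAction.stabilizer Gb (f u) ⊓ MulAction.stabilizer Gb (f v))
    -- (v) edges at f v lift to edges at v
    (h5 : ∀ (v : V) (wb : Vb), Tb.Adj (f v) wb → ∃ w : V, T.Adj v w ∧ f w = wb)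
    -- intersection-lifting hypothesis
    (hlift : ∀ (v u : V), T.Adj v u → ∀ S : Set V, S.Finite → IsSubtree T S → v ∈ S →
      ((((MulAction.stabilizer G v ⊓ MulAction.stabilizer G u).map φ ⊓
          (PStab G S).map φ : Subgroup Gb) : Set Gb).Infinite →
        ∃ g ∈ MulAction.stabilizer G v, φ g = 1 ∧
          (conjSub g (MulAction.stabilizer G v ⊓ MulAction.stabilizer G u) ⊓
            PStab G S).map φ =
          (MulAction.stabilizer G v ⊓ MulAction.stabilizer G u).map φ ⊓ (PStab G S).map φ))
    (Sb1 Sb2 : Set Vb) (hss : Sb1 ⊆ Sb2)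
    (hSb1fin : Sb1.Finite) (hSb2fin : Sb2.Finite)
    (hSb1 : IsSubtree Tb Sb1) (hSb2 : IsSubtree Tb Sb2)
    (hinf : ((PStab Gb Sb2 : Subgroup Gb) : Set Gb).Infinite)
    (S1 : Set V) (hS1fin : S1.Finite) (hS1 : IsSubtree T S1)
    (hiso1 : RestrictsToIso T Tb f S1 Sb1)
    (hps1 : (PStab G S1).map φ = PStab Gb Sb1) :
    ∃ S2 : Set V, S1 ⊆ S2 ∧ S2.Finite ∧ IsSubtree T S2 ∧
      RestrictsToIso T Tb f S2 Sb2 ∧ (PStab G S2).map φ = PStab Gb Sb2 :=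
  lift_finite_subtree_general T Tb htreeb hadj φ f h1 h2 h4 h5 hlift Sb1 Sb2 hss hSb2fin hSb1 hSb2
    hinf S1 hS1fin hS1 hiso1 hps1
end
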